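/- In Q_3, for each color class S_i of the efficient total coloring given by antipodal pairs (S_0={000,111}, etc.), the subgraph induced on V(Q_3) \ S_i is a 6-cycle, and it contains a perfect matching F_i (three edges); assigning color i to the edges of F_i for each i in {0,1,2,3} colors every edge of Q_3 exactly once. -/

import Mathlib

/-- The 3-dimensional hypercube graph on binary strings of length 3. -/
def Q3 : SimpleGraph (Fin 3 → Fin 2) where
  Adj x y := (Finset.univ.filter fun i => x i ≠ y i).card = 1
  symm := by
    constructor
    intro x y h
    have : (Finset.univ.filter fun i => y i ≠ x i)
        = (Finset.univ.filter fun i => x i ≠ y i) :=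
      Finset.filter_congr (fun i _ => ne_comm)
    rw [this]; exact h
  loopless := by constructor; intro x h; simp at h

/-- The cycle graph on `ZMod n`. -/
def cyc (n : ℕ) : SimpleGraph (ZMod n) where
  Adj u v := u ≠ v ∧ (v = u + 1 ∨ u = v + 1)
  symm := by constructor; intro u v ⟨h1, h2⟩; exact ⟨h1.symm, h2.symm⟩
  loopless := by constructor; intro u h; exact h.1 rfl


instance : DecidableRel Q3.Adj := fun x y =>
  inferInstanceAs (Decidable ((Finset.univ.filter fun i => x i ≠ y i).card = 1))

instance : DecidableRel (cyc 6).Adj := fun u v =>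
  inferInstanceAs (Decidable (u ≠ v ∧ (v = u + 1 ∨ u = v + 1)))

instance : DecidablePred (· ∈ Q3.edgeSet) := fun e =>
  e.recOnSubsingleton fun p q => inferInstanceAs (Decidable (Q3.Adj p q))

instance {α : Type*} [Fintype α] [DecidableEq α] (p : α → Prop) [DecidablePred p] :
    Decidable (∃! x, p x) :=
  inferInstanceAs (Decidable (∃ x, p x ∧ ∀ y, p y → y = x))

def mkIso (a b : Fin 3 → Fin 2) (f : ZMod 6 → (Fin 3 → Fin 2)) (g : (Fin 3 → Fin 2) → ZMod 6)
    (hf : ∀ k, f k ≠ a ∧ f k ≠ b) (hgf : ∀ k, g (f k) = k)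
    (hfg : ∀ v, v ≠ a → v ≠ b → f (g v) = v)
    (hadj : ∀ k l, Q3.Adj (f k) (f l) ↔ (cyc 6).Adj k l) :
    Q3.induce ({a, b} : Set (Fin 3 → Fin 2))ᶜ ≃g cyc 6 :=
  RelIso.symm
  { toFun := fun k => ⟨f k, fun h => h.elim (hf k).1 (hf k).2⟩
    invFun := fun v => g v.val
    left_inv := hgf
    right_inv := fun v => Subtype.ext
      (hfg v.val (fun h => v.2 (Or.inl h)) (fun h => v.2 (Or.inr h)))
    map_rel_iff' := by intro k l; exact hadj k l }

def f0 : ZMod 6 → (Fin 3 → Fin 2) := ![![1,0,0],![1,0,1],![0,0,1],![0,1,1],![0,1,0],![1,1,0]]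
def f1 : ZMod 6 → (Fin 3 → Fin 2) := ![![0,0,0],![0,0,1],![1,0,1],![1,1,1],![1,1,0],![0,1,0]]
def f2 : ZMod 6 → (Fin 3 → Fin 2) := ![![0,0,0],![0,0,1],![0,1,1],![1,1,1],![1,1,0],![1,0,0]]
def f3 : ZMod 6 → (Fin 3 → Fin 2) := ![![0,0,0],![1,0,0],![1,0,1],![1,1,1],![0,1,1],![0,1,0]]

def ginv (f : ZMod 6 → (Fin 3 → Fin 2)) : (Fin 3 → Fin 2) → ZMod 6 := fun v =>
  if v = f 1 then 1 else if v = f 2 then 2 else if v = f 3 then 3 else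
  if v = f 4 then 4 else if v = f 5 then 5 else 0

example : True := trivial

theorem stmt6 (S : Fin 4 → Set (Fin 3 → Fin 2))
    (h0 : S 0 = {![0,0,0], ![1,1,1]})
    (h1 : S 1 = {![1,0,0], ![0,1,1]})
    (h2 : S 2 = {![0,1,0], ![1,0,1]})
    (h3 : S 3 = {![0,0,1], ![1,1,0]})
    (F : Fin 4 → Finset (Sym2 (Fin 3 → Fin 2)))
    (hF0 : F 0 = {s(![1,0,0], ![1,0,1]), s(![0,1,0], ![1,1,0]), s(![0,0,1], ![0,1,1])})
    (hF1 : F 1 = {s(![0,0,0], ![0,1,0]), s(![0,0,1], ![1,0,1]), s(![1,1,0], ![1,1,1])})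
    (hF2 : F 2 = {s(![0,0,0], ![0,0,1]), s(![1,0,0], ![1,1,0]), s(![0,1,1], ![1,1,1])})
    (hF3 : F 3 = {s(![0,0,0], ![1,0,0]), s(![0,1,0], ![0,1,1]), s(![1,0,1], ![1,1,1])}) :
    -- the induced subgraph on the complement of each `S i` is a 6-cycle
    (∀ i, Nonempty (Q3.induce (S i)ᶜ ≃g cyc 6)) ∧
    -- each `F i` consists of edges of `Q3` avoiding `S i`
    (∀ i, ∀ e ∈ F i, e ∈ Q3.edgeSet ∧ ∀ v ∈ e, v ∉ S i) ∧
    -- each `F i` is a perfect matching of that induced 6-cycle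
    (∀ i, ∀ v ∉ S i, ∃! e, e ∈ F i ∧ v ∈ e) ∧
    -- together the `F i` partition the edge set of `Q3`
    ((↑(F 0) ∪ ↑(F 1) ∪ ↑(F 2) ∪ ↑(F 3) : Set (Sym2 (Fin 3 → Fin 2))) = Q3.edgeSet) ∧
    (∀ i j, i ≠ j → Disjoint (F i) (F j)) := by
  refine ⟨?_, ?_, ?_, ?_, ?_⟩
  · intro i
    fin_cases i
    · show Nonempty (Q3.induce (S 0)ᶜ ≃g cyc 6)
      rw [h0]; exact ⟨mkIso _ _ f0 (ginv f0) (by decide) (by decide) (by decide) (by decide)⟩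
    · show Nonempty (Q3.induce (S 1)ᶜ ≃g cyc 6)
      rw [h1]; exact ⟨mkIso _ _ f1 (ginv f1) (by decide) (by decide) (by decide) (by decide)⟩
    · show Nonempty (Q3.induce (S 2)ᶜ ≃g cyc 6)
      rw [h2]; exact ⟨mkIso _ _ f2 (ginv f2) (by decide) (by decide) (by decide) (by decide)⟩
    · show Nonempty (Q3.induce (S 3)ᶜ ≃g cyc 6)
      rw [h3]; exact ⟨mkIso _ _ f3 (ginv f3) (by decide) (by decide) (by decide) (by decide)⟩
  · intro i e he
    fin_cases i
    · replace he : e ∈ F 0 := he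
      rw [hF0] at he
      show e ∈ Q3.edgeSet ∧ ∀ v ∈ e, v ∉ S 0
      rw [h0]
      refine ⟨?_, ?_⟩
      · revert he; revert e; decide
      · intro v hv hvS
        simp only [Set.mem_insert_iff, Set.mem_singleton_iff] at hvS
        revert hvS hv he; revert v e; decide
    · replace he : e ∈ F 1 := he
      rw [hF1] at he
      show e ∈ Q3.edgeSet ∧ ∀ v ∈ e, v ∉ S 1
      rw [h1]
      refine ⟨?_, ?_⟩
      · revert he; revert e; decide
      · intro v hv hvS
        simp only [Set.mem_insert_iff, Set.mem_singleton_iff] at hvS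
        revert hvS hv he; revert v e; decide
    · replace he : e ∈ F 2 := he
      rw [hF2] at he
      show e ∈ Q3.edgeSet ∧ ∀ v ∈ e, v ∉ S 2
      rw [h2]
      refine ⟨?_, ?_⟩
      · revert he; revert e; decide
      · intro v hv hvS
        simp only [Set.mem_insert_iff, Set.mem_singleton_iff] at hvS
        revert hvS hv he; revert v e; decide
    · replace he : e ∈ F 3 := he
      rw [hF3] at he
      show e ∈ Q3.edgeSet ∧ ∀ v ∈ e, v ∉ S 3
      rw [h3]
      refine ⟨?_, ?_⟩
      · revert he; revert e; decide
      · intro v hv hvS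
        simp only [Set.mem_insert_iff, Set.mem_singleton_iff] at hvS
        revert hvS hv he; revert v e; decide
  · intro i v hv
    fin_cases i
    · replace hv : v ∉ S 0 := hv
      rw [h0, Set.mem_insert_iff, Set.mem_singleton_iff] at hv
      show ∃! e, e ∈ F 0 ∧ v ∈ e
      rw [hF0]; revert hv; revert v; decide
    · replace hv : v ∉ S 1 := hv
      rw [h1, Set.mem_insert_iff, Set.mem_singleton_iff] at hv
      show ∃! e, e ∈ F 1 ∧ v ∈ e
      rw [hF1]; revert hv; revert v; decide
    · replace hv : v ∉ S 2 := hv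
      rw [h2, Set.mem_insert_iff, Set.mem_singleton_iff] at hv
      show ∃! e, e ∈ F 2 ∧ v ∈ e
      rw [hF2]; revert hv; revert v; decide
    · replace hv : v ∉ S 3 := hv
      rw [h3, Set.mem_insert_iff, Set.mem_singleton_iff] at hv
      show ∃! e, e ∈ F 3 ∧ v ∈ e
      rw [hF3]; revert hv; revert v; decide
  · rw [hF0, hF1, hF2, hF3]
    ext e
    simp only [Set.mem_union, Finset.mem_coe, SimpleGraph.mem_edgeSet]
    revert e; decide
  · have d01 : Disjoint (F 0) (F 1) := by rw [hF0, hF1, Finset.disjoint_left]; decide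
    have d02 : Disjoint (F 0) (F 2) := by rw [hF0, hF2, Finset.disjoint_left]; decide
    have d03 : Disjoint (F 0) (F 3) := by rw [hF0, hF3, Finset.disjoint_left]; decide
    have d12 : Disjoint (F 1) (F 2) := by rw [hF1, hF2, Finset.disjoint_left]; decide
    have d13 : Disjoint (F 1) (F 3) := by rw [hF1, hF3, Finset.disjoint_left]; decide
    have d23 : Disjoint (F 2) (F 3) := by rw [hF2, hF3, Finset.disjoint_left]; decide
    intro i j hij
    fin_cases i <;> fin_cases j <;>
      first
        | exact absurd rfl hij
        | exact d01 | exact d01.symm | exact d02 | exact d02.symm | exact d03 | exact d03.symm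
        | exact d12 | exact d12.symm | exact d13 | exact d13.symm | exact d23 | exact d23.symm
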